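/- arXiv:1405.6300 — 2 statements merged into one kernel-verified Lean document; each statement's English description precedes it below -/
import Mathlib

section
/- Let ξ, φ : ℝ → ℝ be smooth with ξ′(x) ≠ 0 and φ(x) ≠ 0 for all x, and let Φ be the prolongation to J⁴ of the fiber-preserving transformation x̄ = ξ(x), ū = φ(x)u. Then on the set {u ≠ 0}, the pullback under Φ of the one-form (dū − p̄ dx̄)/ū (the form (du − p dx)/u written in the barred coordinates) equals (du − p dx)/u; i.e., the one-form ω² = (du − p dx)/u is invariant under all prolonged fiber-preserving transformations. -/
noncomputable section

/-- The fourth jet space `J⁴`, with coordinates `z = (x,u,p,q,r,s)` indexed `0,…,5`. -/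
abbrev J : Type := Fin 6 → ℝ

/-- A differential 1-form on (an open subset of) `J ≅ ℝ⁶`. -/
abbrev OneForm : Type := J → (J →L[ℝ] ℝ)

/-- The constant coordinate one-forms `dx, du, dp, dq, dr, ds` (`i = 0,…,5`). -/
def coord (i : Fin 6) : J →L[ℝ] ℝ := ContinuousLinearMap.proj i

/-- Exterior derivative of a 1-form, as a 2-form. -/
def extd (ω : OneForm) : J → J → J → ℝ :=
  fun z X Y => fderiv ℝ ω z X Y - fderiv ℝ ω z Y X

/-- Wedge product of two 1-forms, as a 2-form. -/
def wedge (α β : OneForm) : J → J → J → ℝ :=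
  fun z X Y => α z X * β z Y - α z Y * β z X

/-- Pullback of a 1-form under a map `Φ : J → J`. -/
def pullback (Φ : J → J) (ω : OneForm) : OneForm :=
  fun z => (ω (Φ z)).comp (fderiv ℝ Φ z)

/-- Truncated total derivative `D_x = ∂_x + p∂_u + q∂_p + r∂_q + s∂_r`. -/
def Dx (F : J → ℝ) : J → ℝ :=
  fun z => fderiv ℝ F z ![1, z 2, z 3, z 4, z 5, 0]

def pbar (ξ φ : ℝ → ℝ) : J → ℝ :=
  fun z => (deriv φ (z 0) * z 1 + φ (z 0) * z 2) / deriv ξ (z 0)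

def qbar (ξ φ : ℝ → ℝ) : J → ℝ := fun z => Dx (pbar ξ φ) z / deriv ξ (z 0)

def rbar (ξ φ : ℝ → ℝ) : J → ℝ := fun z => Dx (qbar ξ φ) z / deriv ξ (z 0)

def sbar (ξ φ : ℝ → ℝ) : J → ℝ := fun z => Dx (rbar ξ φ) z / deriv ξ (z 0)

/-- The prolongation to `J⁴` of the fiber-preserving transformation
`x̄ = ξ(x), ū = φ(x)u`. -/
def Prolong (ξ φ : ℝ → ℝ) : J → J :=
  fun z => ![ξ (z 0), φ (z 0) * z 1, pbar ξ φ z, qbar ξ φ z, rbar ξ φ z, sbar ξ φ z]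

/-- `ω¹ = dx`. -/
def ω1 : OneForm := fun _ => coord 0
/-- `ω² = (du − p dx)/u`. -/
def ω2 : OneForm := fun z => (z 1)⁻¹ • (coord 1 - z 2 • coord 0)
/-- `ω³ = dp − q dx`. -/
def ω3 : OneForm := fun z => coord 2 - z 3 • coord 0
/-- `ω⁴ = dq − r dx`. -/
def ω4 : OneForm := fun z => coord 3 - z 4 • coord 0
/-- `ω⁵ = dr − s dx`. -/
def ω5 : OneForm := fun z => coord 4 - z 5 • coord 0

/-- `I = f₄s + f₃r + f₂q + f₁p + f₀u` (direct equivalence invariant). -/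
def Idir (f : Fin 5 → ℝ → ℝ) : J → ℝ :=
  fun z => f 4 (z 0) * z 5 + f 3 (z 0) * z 4 + f 2 (z 0) * z 3 + f 1 (z 0) * z 2 + f 0 (z 0) * z 1

/-- `I = (f₄s + f₃r + f₂q + f₁p)/u + f₀` (gauge equivalence invariant). -/
def Igau (f : Fin 5 → ℝ → ℝ) : J → ℝ :=
  fun z => (f 4 (z 0) * z 5 + f 3 (z 0) * z 4 + f 2 (z 0) * z 3 + f 1 (z 0) * z 2) / z 1 + f 0 (z 0)

/-!
Along `Φ` we have `dx̄ = ξ′ dx` and `dū = φ′u dx + φ du`, and `p̄ ξ′ = φ′u + φp`, so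
`dū − p̄ dx̄ = φ (du − p dx)`; dividing by `ū = φu` gives `ω²`. The higher components
`q̄, r̄, s̄` play no role in this computation, but `fderiv ℝ Φ` is the junk value `0` unless
all of `Φ` is differentiable, which is why their smoothness is established first.
-/

open scoped ContDiff

lemma contDiff_Dx {F : J → ℝ} (hF : ContDiff ℝ ∞ F) : ContDiff ℝ ∞ (Dx F) := by
  have hdir : ContDiff ℝ ∞ (fun z : J => (![1, z 2, z 3, z 4, z 5, 0] : J)) := by
    refine contDiff_pi.2 fun i => ?_
    fin_cases i <;> simp only [Fin.zero_eta, Fin.mk_one, Fin.reduceFinMk, Fin.isValue,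
      Matrix.cons_val] <;> first | exact contDiff_const | exact contDiff_apply ℝ ℝ _
  exact (hF.fderiv_right le_rfl).clm_apply hdir

lemma contDiff_div_deriv_apply_zero {ξ : ℝ → ℝ} (hξ : ContDiff ℝ ∞ ξ) (hξ' : ∀ x, deriv ξ x ≠ 0)
    {G : J → ℝ} (hG : ContDiff ℝ ∞ G) : ContDiff ℝ ∞ (fun z => G z / deriv ξ (z 0)) :=
  hG.div ((contDiff_infty_iff_deriv.1 hξ).2.comp (contDiff_apply ℝ ℝ 0)) fun z => hξ' (z 0)

section Prolong

variable {ξ φ : ℝ → ℝ} (hξ : ContDiff ℝ ∞ ξ) (hφ : ContDiff ℝ ∞ φ) (hξ' : ∀ x, deriv ξ x ≠ 0)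
include hξ hφ hξ'

lemma contDiff_pbar : ContDiff ℝ ∞ (pbar ξ φ) :=
  contDiff_div_deriv_apply_zero hξ hξ'
    ((((contDiff_infty_iff_deriv.1 hφ).2.comp (contDiff_apply ℝ ℝ 0)).mul
      (contDiff_apply ℝ ℝ 1)).add ((hφ.comp (contDiff_apply ℝ ℝ 0)).mul (contDiff_apply ℝ ℝ 2)))

lemma contDiff_qbar : ContDiff ℝ ∞ (qbar ξ φ) :=
  contDiff_div_deriv_apply_zero hξ hξ' (contDiff_Dx (contDiff_pbar hξ hφ hξ'))

lemma contDiff_rbar : ContDiff ℝ ∞ (rbar ξ φ) :=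
  contDiff_div_deriv_apply_zero hξ hξ' (contDiff_Dx (contDiff_qbar hξ hφ hξ'))

lemma contDiff_sbar : ContDiff ℝ ∞ (sbar ξ φ) :=
  contDiff_div_deriv_apply_zero hξ hξ' (contDiff_Dx (contDiff_rbar hξ hφ hξ'))

lemma contDiff_Prolong : ContDiff ℝ ∞ (Prolong ξ φ) := by
  refine contDiff_pi.2 fun i => ?_
  fin_cases i
  · exact hξ.comp (contDiff_apply ℝ ℝ 0)
  · exact (hφ.comp (contDiff_apply ℝ ℝ 0)).mul (contDiff_apply ℝ ℝ 1)
  · exact contDiff_pbar hξ hφ hξ'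
  · exact contDiff_qbar hξ hφ hξ'
  · exact contDiff_rbar hξ hφ hξ'
  · exact contDiff_sbar hξ hφ hξ'

end Prolong

lemma hasFDerivAt_comp_apply_zero {f : ℝ → ℝ} (z : J) (hf : DifferentiableAt ℝ f (z 0)) :
    HasFDerivAt (fun w : J => f (w 0)) (deriv f (z 0) • coord 0) z :=
  hf.hasDerivAt.comp_hasFDerivAt z (hasFDerivAt_apply 0 z)

lemma pullback_ω2 {Φ : J → J} {z : J} (hΦ : DifferentiableAt ℝ Φ z) :
    pullback Φ ω2 z = (Φ z 1)⁻¹ •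
      (fderiv ℝ (fun w => Φ w 1) z - Φ z 2 • fderiv ℝ (fun w => Φ w 0) z) := by
  rw [pullback, ω2, fderiv_pi fun i => differentiableAt_pi.1 hΦ i]
  ext v
  simp [coord]

/-- the one-form `ω² = (du − p dx)/u` is invariant under every prolonged
fiber-preserving transformation `x̄ = ξ(x), ū = φ(x)u` on the set `{u ≠ 0}`. -/
theorem omega2_invariant (ξ φ : ℝ → ℝ)
    (hξ : ContDiff ℝ (⊤ : ℕ∞) ξ) (hφ : ContDiff ℝ (⊤ : ℕ∞) φ)
    (hξ' : ∀ x, deriv ξ x ≠ 0) (hφ0 : ∀ x, φ x ≠ 0) :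
    ∀ z : J, z 1 ≠ 0 → pullback (Prolong ξ φ) ω2 z = ω2 z := by
  intro z hz
  have hx : HasFDerivAt (fun w => Prolong ξ φ w 0) (deriv ξ (z 0) • coord 0) z :=
    hasFDerivAt_comp_apply_zero z (hξ.differentiable (by simp) (z 0))
  have hu : HasFDerivAt (fun w => Prolong ξ φ w 1)
      (φ (z 0) • coord 1 + z 1 • deriv φ (z 0) • coord 0) z :=
    (hasFDerivAt_comp_apply_zero z (hφ.differentiable (by simp) (z 0))).mul
      (hasFDerivAt_apply 1 z)
  rw [pullback_ω2 ((contDiff_Prolong hξ hφ hξ').differentiable (by simp) z), hx.fderiv, hu.fderiv]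
  ext v
  simp only [Prolong, Fin.isValue, pbar, Matrix.cons_val_one, Matrix.cons_val_zero, mul_inv_rev,
    coord, Matrix.cons_val, smul_apply, sub_apply, add_apply, ContinuousLinearMap.proj_apply,
    smul_eq_mul, ω2]
  field_simp [hz, hφ0 (z 0), hξ' (z 0)]
  ring
end
end

section
/- (Proposition 1, direct equivalence.) Let D[u] = Σ_{i=0}^{4} fᵢ(x)Dⁱu and D̄[ū] = Σ_{i=0}^{4} f̄ᵢ(x̄)D̄ⁱū be fourth order differential operators with smooth coefficients, and suppose they are directly equivalent under the fiber-preserving transformation x̄ = ξ(x), ū = φ(x)u (ξ′ ≠ 0, φ ≠ 0): for every smooth u, writing ū(ξ(x)) = φ(x)u(x), one has D̄[ū](ξ(x)) = D[u](x) for all x. Let Φ be the prolongation of the transformation to J⁴, let ω¹,…,ω⁵ be the base coframe, ω⁶ = dI with I = f₄s + f₃r + f₂q + f₁p + f₀u, and let ω̄¹,…,ω̄⁶ be the corresponding forms built from f̄ᵢ in the barred coordinates. Then on {u ≠ 0}: Φ*ω̄¹ = a₁ω¹, Φ*ω̄² = ω², Φ*ω̄³ = a₂ω² + a₃ω³, Φ*ω̄⁴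 = a₄ω² + a₅ω³ + a₆ω⁴, Φ*ω̄⁵ = a₇ω² + a₈ω³ + a₉ω⁴ + a₁₀ω⁵, and Φ*ω̄⁶ = ω⁶, for smooth functions a₁,…,a₁₀ with a₁a₃a₆a₁₀ ≠ 0 everywhere (indeed a₁ = ξ′, a₃ = φ/ξ′, a₆ = φ/ξ′², a₁₀ = φ/ξ′³). -/
noncomputable section

/-!
Each component of the prolongation is linear in the fibre coordinates,
`Φ_{k+1} = Σ_j c_{k,j}(x) u^{(j)}`, where `c_0 = (φ, 0, …, 0)` and `c_{k+1}` is obtained from `c_k`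
by taking the coefficients of the total derivative and dividing by `ξ'`; in particular
`c_{k,j} = 0` for `j > k` and `c_{k,k} = φ/ξ'^k`. For a fibre-linear `F` without `s`-term, the form
`dF − (D_x F) dx` is `c_0 u ω² + c_1 ω³ + c_2 ω⁴ + c_3 ω⁵`, and since
`Φ_{k+2} dΦ_0 = (D_x Φ_{k+1}) dx`, pulling back the contact forms gives the triangular structure.

For `ω⁶`: if `v ∘ ξ = φ u`, then `Φ` maps the 4-jet of `u` at `x` to the 4-jet of `v` at `ξ x`,
so direct equivalence says `Ī ∘ Φ = I` at every such jet. Every point of `J⁴` is one: with `v` a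
polynomial in `t − ξ x₀` and `u = (v ∘ ξ)/φ`, the jets at `x₀` of `(ξ − ξ x₀)^k / φ` form a
triangular system with nonzero diagonal. Hence `Ī ∘ Φ = I`, and `Φ*dĪ = dI`.
-/

open scoped ContDiff

theorem ContDiff.hasDerivAt_iteratedDeriv {u : ℝ → ℝ} (hu : ContDiff ℝ ∞ u) (n : ℕ) (x : ℝ) :
    HasDerivAt (iteratedDeriv n u) (iteratedDeriv (n + 1) u x) x := by
  rw [iteratedDeriv_succ]
  exact (hu.differentiable_iteratedDeriv n (mod_cast ENat.natCast_lt_top n) x).hasDerivAt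

theorem iteratedDeriv_sub_pow_mul {ξ h : ℝ → ℝ} (hξ : ContDiff ℝ ∞ ξ) (hh : ContDiff ℝ ∞ h)
    (x₀ : ℝ) (k : ℕ) :
    (∀ j < k, iteratedDeriv j (fun x => (ξ x - ξ x₀) ^ k * h x) x₀ = 0) ∧
      iteratedDeriv k (fun x => (ξ x - ξ x₀) ^ k * h x) x₀
        = k.factorial * deriv ξ x₀ ^ k * h x₀ := by
  induction k generalizing h with
  | zero => simp
  | succ k ih =>
    set H : ℝ → ℝ := fun x => (k + 1) * deriv ξ x * h x + (ξ x - ξ x₀) * deriv h x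
    have hH : ContDiff ℝ ∞ H :=
      ((contDiff_const.mul (contDiff_infty_iff_deriv.mp hξ).2).mul hh).add
        ((hξ.sub contDiff_const).mul (contDiff_infty_iff_deriv.mp hh).2)
    have hderiv : deriv (fun x => (ξ x - ξ x₀) ^ (k + 1) * h x)
        = fun x => (ξ x - ξ x₀) ^ k * H x := by
      funext x
      have hξx := (hξ.differentiable (by simp) x).hasDerivAt
      have hhx := (hh.differentiable (by simp) x).hasDerivAt
      rw [(((hξx.sub_const (ξ x₀)).fun_pow (k + 1)).fun_mul hhx).deriv]
      simp only [H, Nat.cast_add, Nat.cast_one, add_tsub_cancel_right]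
      ring
    refine ⟨fun j hj => ?_, ?_⟩
    · cases j with
      | zero => simp
      | succ j => rw [iteratedDeriv_succ', hderiv]; exact (ih hH).1 j (by omega)
    · rw [iteratedDeriv_succ', hderiv, (ih hH).2]
      simp only [H, sub_self, zero_mul, add_zero, Nat.factorial_succ]
      push_cast
      ring

theorem exists_iteratedDeriv_sum_eq {n : ℕ} {b : Fin n → ℝ → ℝ} (hb : ∀ k, ContDiff ℝ ∞ (b k))
    {x₀ : ℝ} (hlt : ∀ j k : Fin n, j < k → iteratedDeriv j (b k) x₀ = 0)
    (hdiag : ∀ k : Fin n, iteratedDeriv k (b k) x₀ ≠ 0) (w : Fin n → ℝ) :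
    ∃ e : Fin n → ℝ, ∀ j : Fin n, iteratedDeriv j (fun x => ∑ k, e k * b k x) x₀ = w j := by
  set M : Matrix (Fin n) (Fin n) ℝ := Matrix.of fun j k => iteratedDeriv j (b k) x₀
  have hM : IsUnit M := by
    rw [Matrix.isUnit_iff_isUnit_det, Matrix.det_of_isLowerTriangular M fun j k h => hlt j k h]
    exact isUnit_iff_ne_zero.mpr (Finset.prod_ne_zero_iff.mpr fun k _ => hdiag k)
  obtain ⟨e, he⟩ := Matrix.mulVec_surjective_iff_isUnit.mpr hM w
  refine ⟨e, fun j => ?_⟩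
  rw [iteratedDeriv_fun_sum fun k _ =>
    (contDiff_const.mul (hb k)).contDiffAt.of_le (mod_cast (ENat.natCast_lt_top j).le)]
  simp only [iteratedDeriv_const_mul_field, ← he]
  simp [M, Matrix.mulVec, dotProduct, mul_comm]

section Pullback

variable {Φ : J → J} {z : J}

theorem pullback_smul (a : J → ℝ) (θ : OneForm) :
    pullback Φ (fun z => a z • θ z) z = a (Φ z) • pullback Φ θ z :=
  ContinuousLinearMap.smul_comp _ _ _

theorem pullback_coord (hΦ : DifferentiableAt ℝ Φ z) (i : Fin 6) :
    pullback Φ (fun _ => coord i) z = fderiv ℝ (fun z => Φ z i) z :=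
  (fderiv_apply hΦ i).symm

theorem pullback_coord_sub_smul (hΦ : DifferentiableAt ℝ Φ z) (i j : Fin 6) :
    pullback Φ (fun z => coord i - z j • coord 0) z
      = fderiv ℝ (fun z => Φ z i) z - Φ z j • fderiv ℝ (fun z => Φ z 0) z := by
  rw [← pullback_coord hΦ, ← pullback_coord hΦ]
  simp [pullback, ContinuousLinearMap.sub_comp, ContinuousLinearMap.smul_comp]

theorem pullback_fderiv {F : J → ℝ} (hF : DifferentiableAt ℝ F (Φ z))
    (hΦ : DifferentiableAt ℝ Φ z) :
    pullback Φ (fderiv ℝ F) z = fderiv ℝ (F ∘ Φ) z :=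
  (fderiv_comp z hF hΦ).symm

end Pullback

/-- Coefficients are indexed by `ℕ` so that the shift in `totalDerivCoeffs` needs no `Fin`
arithmetic; those beyond `4` are ignored. -/
def fiberLinear (g : ℕ → ℝ → ℝ) (z : J) : ℝ := ∑ j : Fin 5, g j (z 0) * z j.succ

/-- `D_x (Σ_j g_j u^{(j)}) = Σ_j (g_j' + g_{j-1}) u^{(j)}`. -/
def totalDerivCoeffs (g : ℕ → ℝ → ℝ) : ℕ → ℝ → ℝ
  | 0 => deriv (g 0)
  | j + 1 => deriv (g (j + 1)) + g j

section FiberLinear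

variable {g : ℕ → ℝ → ℝ}

theorem fiberLinear_apply (z : J) :
    fiberLinear g z
      = g 0 (z 0) * z 1 + g 1 (z 0) * z 2 + g 2 (z 0) * z 3 + g 3 (z 0) * z 4
        + g 4 (z 0) * z 5 := by
  simp [fiberLinear, Fin.sum_univ_five]

theorem hasFDerivAt_fiberLinear (hg : ∀ j, Differentiable ℝ (g j)) (z : J) :
    HasFDerivAt (fiberLinear g)
      (fiberLinear (fun j => deriv (g j)) z • coord 0 + ∑ j : Fin 5, g j (z 0) • coord j.succ)
      z := by
  have h := HasFDerivAt.fun_sum (u := Finset.univ) fun (j : Fin 5) _ =>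
    ((hg j (z 0)).hasDerivAt.comp_hasFDerivAt z (coord 0).hasFDerivAt).mul
      (coord j.succ).hasFDerivAt
  refine h.congr_fderiv ?_
  rw [Finset.sum_add_distrib, add_comm, fiberLinear, Finset.sum_smul]
  congr 1
  refine Finset.sum_congr rfl fun j _ => ?_
  rw [smul_smul, mul_comm]
  rfl

theorem differentiable_fiberLinear (hg : ∀ j, Differentiable ℝ (g j)) :
    Differentiable ℝ (fiberLinear g) :=
  fun z => (hasFDerivAt_fiberLinear hg z).differentiableAt

theorem Dx_fiberLinear (hg : ∀ j, Differentiable ℝ (g j)) (z : J) :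
    Dx (fiberLinear g) z = fiberLinear (totalDerivCoeffs g) z := by
  simp only [Dx, (hasFDerivAt_fiberLinear hg z).fderiv, add_apply, smul_apply, coord,
    ContinuousLinearMap.proj_apply, Fin.sum_univ_five, Matrix.cons_val_succ, fiberLinear_apply,
    smul_eq_mul, Matrix.cons_val, Fin.coe_ofNat_eq_mod, Nat.reduceMod, totalDerivCoeffs,
    Pi.add_apply]
  ring

theorem fderiv_fiberLinear_sub_Dx (hg : ∀ j, Differentiable ℝ (g j)) (hg4 : g 4 = 0) {z : J}
    (hz : z 1 ≠ 0) :
    fderiv ℝ (fiberLinear g) z - Dx (fiberLinear g) z • coord 0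
      = (g 0 (z 0) * z 1) • ω2 z + g 1 (z 0) • ω3 z + g 2 (z 0) • ω4 z + g 3 (z 0) • ω5 z := by
  rw [Dx_fiberLinear hg, (hasFDerivAt_fiberLinear hg z).fderiv]
  ext w
  simp only [fiberLinear_apply, totalDerivCoeffs, hg4, ω2, ω3, ω4, ω5, coord, sub_apply,
    add_apply, smul_apply, ContinuousLinearMap.proj_apply, smul_eq_mul, Fin.sum_univ_five,
    Fin.coe_ofNat_eq_mod, Nat.reduceMod, Fin.succ_zero_eq_one, Fin.succ_one_eq_two,
    Fin.reduceSucc, Pi.add_apply, Pi.zero_apply]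
  field_simp
  ring

end FiberLinear

section ProlongCoeffs

variable (ξ φ : ℝ → ℝ)

/-- `prolongCoeffs ξ φ n` are the coefficients of the component `ū^{(n)}` of `Prolong ξ φ`
(see `prolong_succ`). -/
def prolongCoeffs : ℕ → ℕ → ℝ → ℝ
  | 0 => Pi.single 0 φ
  | n + 1 => fun j x => totalDerivCoeffs (prolongCoeffs n) j x / deriv ξ x

theorem prolongCoeffs_of_lt {n j : ℕ} (h : n < j) : prolongCoeffs ξ φ n j = 0 := by
  induction n generalizing j with
  | zero => simp [prolongCoeffs, h.ne']
  | succ n ih =>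
    cases j with
    | zero => omega
    | succ j =>
      funext x
      simp [prolongCoeffs, totalDerivCoeffs, ih (by omega : n < j + 1), ih (by omega : n < j)]

theorem prolongCoeffs_self (n : ℕ) :
    prolongCoeffs ξ φ n n = fun x => φ x / deriv ξ x ^ n := by
  induction n with
  | zero => simp [prolongCoeffs]
  | succ n ih =>
    funext x
    simp [prolongCoeffs, totalDerivCoeffs, prolongCoeffs_of_lt ξ φ (Nat.lt_succ_self n), ih,
      pow_succ, div_div]

theorem contDiff_prolongCoeffs (hξ : ContDiff ℝ ∞ ξ) (hφ : ContDiff ℝ ∞ φ)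
    (hξ' : ∀ x, deriv ξ x ≠ 0) (n j : ℕ) : ContDiff ℝ ∞ (prolongCoeffs ξ φ n j) := by
  induction n generalizing j with
  | zero =>
    rcases eq_or_ne j 0 with rfl | hj
    · simpa [prolongCoeffs] using hφ
    · rw [prolongCoeffs, Pi.single_eq_of_ne hj]
      exact contDiff_zero_fun
  | succ n ih =>
    have hξ'' : ContDiff ℝ ∞ (deriv ξ) := (contDiff_infty_iff_deriv.mp hξ).2
    have hd : ∀ i, ContDiff ℝ ∞ (deriv (prolongCoeffs ξ φ n i)) :=
      fun i => (contDiff_infty_iff_deriv.mp (ih i)).2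
    cases j with
    | zero => exact (hd 0).div hξ'' hξ'
    | succ j => exact ((hd (j + 1)).add (ih j)).div hξ'' hξ'

theorem differentiable_prolongCoeffs (hξ : ContDiff ℝ ∞ ξ) (hφ : ContDiff ℝ ∞ φ)
    (hξ' : ∀ x, deriv ξ x ≠ 0) (n j : ℕ) : Differentiable ℝ (prolongCoeffs ξ φ n j) :=
  (contDiff_prolongCoeffs ξ φ hξ hφ hξ' n j).differentiable (by simp)

theorem fiberLinear_prolongCoeffs_succ (n : ℕ) (z : J) :
    fiberLinear (prolongCoeffs ξ φ (n + 1)) z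
      = fiberLinear (totalDerivCoeffs (prolongCoeffs ξ φ n)) z / deriv ξ (z 0) := by
  simp only [fiberLinear, prolongCoeffs, Finset.sum_div]
  exact Finset.sum_congr rfl fun j _ => div_mul_eq_mul_div _ _ _

theorem Dx_fiberLinear_prolongCoeffs_div {n : ℕ}
    (hc : ∀ j, Differentiable ℝ (prolongCoeffs ξ φ n j)) (z : J) :
    Dx (fiberLinear (prolongCoeffs ξ φ n)) z / deriv ξ (z 0)
      = fiberLinear (prolongCoeffs ξ φ (n + 1)) z := by
  rw [Dx_fiberLinear hc, fiberLinear_prolongCoeffs_succ]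

end ProlongCoeffs

section Prolong

variable {ξ φ : ℝ → ℝ}

theorem pbar_eq_fiberLinear : pbar ξ φ = fiberLinear (prolongCoeffs ξ φ 1) := by
  funext z
  simp only [pbar, fiberLinear_apply, prolongCoeffs, totalDerivCoeffs, Pi.single_eq_same, ne_eq,
    Nat.add_eq_zero_iff, one_ne_zero, OfNat.ofNat_ne_zero, and_false, not_false_eq_true,
    Pi.single_eq_of_ne, deriv_zero, Pi.add_apply, Pi.zero_apply]
  ring

theorem prolong_succ (hξ : ContDiff ℝ ∞ ξ) (hφ : ContDiff ℝ ∞ φ) (hξ' : ∀ x, deriv ξ x ≠ 0)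
    (k : Fin 5) : (fun z => Prolong ξ φ z k.succ) = fiberLinear (prolongCoeffs ξ φ k) := by
  have hc := differentiable_prolongCoeffs ξ φ hξ hφ hξ'
  have hq : qbar ξ φ = fiberLinear (prolongCoeffs ξ φ 2) := by
    funext z
    rw [qbar, pbar_eq_fiberLinear, Dx_fiberLinear_prolongCoeffs_div ξ φ (hc 1)]
  have hr : rbar ξ φ = fiberLinear (prolongCoeffs ξ φ 3) := by
    funext z
    rw [rbar, hq, Dx_fiberLinear_prolongCoeffs_div ξ φ (hc 2)]
  have hs : sbar ξ φ = fiberLinear (prolongCoeffs ξ φ 4) := by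
    funext z
    rw [sbar, hr, Dx_fiberLinear_prolongCoeffs_div ξ φ (hc 3)]
  fin_cases k
  · funext z
    simp [Prolong, fiberLinear, prolongCoeffs, Fin.sum_univ_five]
  · exact pbar_eq_fiberLinear
  · exact hq
  · exact hr
  · exact hs

theorem differentiable_prolong (hξ : ContDiff ℝ ∞ ξ) (hφ : ContDiff ℝ ∞ φ)
    (hξ' : ∀ x, deriv ξ x ≠ 0) : Differentiable ℝ (Prolong ξ φ) := by
  refine differentiable_pi.mpr fun i => Fin.cases ?_ (fun k => ?_) i
  · exact (hξ.differentiable (by simp)).comp (coord 0).differentiable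
  · rw [prolong_succ hξ hφ hξ' k]
    exact differentiable_fiberLinear (differentiable_prolongCoeffs ξ φ hξ hφ hξ' k)

theorem fderiv_prolong_zero (hξ : ContDiff ℝ ∞ ξ) (z : J) :
    fderiv ℝ (fun z => Prolong ξ φ z 0) z = deriv ξ (z 0) • coord 0 :=
  ((hξ.differentiable (by simp) (z 0)).hasDerivAt.comp_hasFDerivAt z
    (coord 0).hasFDerivAt).fderiv

theorem pullback_prolong_ω1 (hξ : ContDiff ℝ ∞ ξ) (hφ : ContDiff ℝ ∞ φ)
    (hξ' : ∀ x, deriv ξ x ≠ 0) (z : J) :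
    pullback (Prolong ξ φ) ω1 z = deriv ξ (z 0) • ω1 z :=
  (pullback_coord (differentiable_prolong hξ hφ hξ' z) 0).trans (fderiv_prolong_zero hξ z)

theorem pullback_prolong_contact (hξ : ContDiff ℝ ∞ ξ) (hφ : ContDiff ℝ ∞ φ)
    (hξ' : ∀ x, deriv ξ x ≠ 0) (k : Fin 4) {z : J} (hz : z 1 ≠ 0) :
    pullback (Prolong ξ φ) (fun z => coord k.castSucc.succ - z k.succ.succ • coord 0) z
      = (prolongCoeffs ξ φ k 0 (z 0) * z 1) • ω2 z + prolongCoeffs ξ φ k 1 (z 0) • ω3 z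
        + prolongCoeffs ξ φ k 2 (z 0) • ω4 z + prolongCoeffs ξ φ k 3 (z 0) • ω5 z := by
  have hc := differentiable_prolongCoeffs ξ φ hξ hφ hξ' k
  have hnext : Prolong ξ φ z k.succ.succ = fiberLinear (prolongCoeffs ξ φ (k + 1)) z :=
    congrFun (prolong_succ hξ hφ hξ' k.succ) z
  rw [pullback_coord_sub_smul (differentiable_prolong hξ hφ hξ' z),
    prolong_succ hξ hφ hξ' k.castSucc, fderiv_prolong_zero hξ, hnext,
    ← Dx_fiberLinear_prolongCoeffs_div ξ φ hc, smul_smul, div_mul_cancel₀ _ (hξ' (z 0))]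
  exact fderiv_fiberLinear_sub_Dx hc (prolongCoeffs_of_lt ξ φ k.is_lt) hz

theorem pullback_prolong_ω2 (hξ : ContDiff ℝ ∞ ξ) (hφ : ContDiff ℝ ∞ φ)
    (hξ' : ∀ x, deriv ξ x ≠ 0) (hφ0 : ∀ x, φ x ≠ 0) {z : J} (hz : z 1 ≠ 0) :
    pullback (Prolong ξ φ) ω2 z = ω2 z := by
  calc pullback (Prolong ξ φ) ω2 z
      = (Prolong ξ φ z 1)⁻¹ • pullback (Prolong ξ φ) (fun z => coord 1 - z 2 • coord 0) z :=
        pullback_smul (fun z => (z 1)⁻¹) _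
    _ = (φ (z 0) * z 1)⁻¹ • (φ (z 0) * z 1) • ω2 z := by
        erw [pullback_prolong_contact hξ hφ hξ' 0 hz]
        simp [Prolong, prolongCoeffs]
    _ = ω2 z := inv_smul_smul₀ (mul_ne_zero (hφ0 _) hz) _

end Prolong

def jet (u : ℝ → ℝ) (x : ℝ) : J := Fin.cons x fun k : Fin 5 => iteratedDeriv k u x

theorem fiberLinear_jet (g : ℕ → ℝ → ℝ) (u : ℝ → ℝ) (x : ℝ) :
    fiberLinear g (jet u x) = ∑ j : Fin 5, g j x * iteratedDeriv j u x := rfl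

theorem Idir_eq_sum (f : Fin 5 → ℝ → ℝ) :
    Idir f = fun z => ∑ i : Fin 5, f i (z 0) * z i.succ := by
  funext z
  simp only [Idir, Fin.sum_univ_five, Fin.succ_zero_eq_one, Fin.succ_one_eq_two, Fin.reduceSucc]
  ring

theorem Idir_jet (f : Fin 5 → ℝ → ℝ) (u : ℝ → ℝ) (x : ℝ) :
    Idir f (jet u x) = ∑ i : Fin 5, f i x * iteratedDeriv i u x := by
  rw [Idir_eq_sum]
  rfl

theorem hasDerivAt_fiberLinear_jet {g : ℕ → ℝ → ℝ} (hg : ∀ j, Differentiable ℝ (g j))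
    (hg4 : g 4 = 0) {u : ℝ → ℝ} (hu : ContDiff ℝ ∞ u) (x : ℝ) :
    HasDerivAt (fun x => fiberLinear g (jet u x))
      (fiberLinear (totalDerivCoeffs g) (jet u x)) x := by
  have h := HasDerivAt.fun_sum (u := Finset.univ) fun (j : Fin 5) _ =>
    (hg j x).hasDerivAt.mul (hu.hasDerivAt_iteratedDeriv j x)
  refine h.congr_deriv ?_
  simp only [fiberLinear_jet, totalDerivCoeffs, Fin.sum_univ_five, Fin.coe_ofNat_eq_mod,
    Nat.reduceMod, Nat.reduceAdd, hg4, Pi.add_apply, Pi.zero_apply, zero_mul, add_zero]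
  ring

section Jets

variable {ξ φ u v : ℝ → ℝ}

theorem fiberLinear_prolongCoeffs_jet (hξ : ContDiff ℝ ∞ ξ) (hφ : ContDiff ℝ ∞ φ)
    (hξ' : ∀ x, deriv ξ x ≠ 0) (hu : ContDiff ℝ ∞ u) (hv : ContDiff ℝ ∞ v)
    (hcomp : ∀ x, v (ξ x) = φ x * u x) {n : ℕ} (hn : n ≤ 4) (x : ℝ) :
    fiberLinear (prolongCoeffs ξ φ n) (jet u x) = iteratedDeriv n v (ξ x) := by
  induction n generalizing x with
  | zero => simp [fiberLinear_jet, prolongCoeffs, Fin.sum_univ_five, hcomp]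
  | succ n ih =>
    have hv' : HasDerivAt (fun x => fiberLinear (prolongCoeffs ξ φ n) (jet u x))
        (iteratedDeriv (n + 1) v (ξ x) * deriv ξ x) x := by
      rw [funext (ih (by omega))]
      exact (hv.hasDerivAt_iteratedDeriv n (ξ x)).comp x
        (hξ.differentiable (by simp) x).hasDerivAt
    rw [fiberLinear_prolongCoeffs_succ, (hasDerivAt_fiberLinear_jet
      (differentiable_prolongCoeffs ξ φ hξ hφ hξ' n) (prolongCoeffs_of_lt ξ φ (by omega))
      hu x).unique hv']
    exact mul_div_cancel_right₀ _ (hξ' x)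

theorem prolong_jet (hξ : ContDiff ℝ ∞ ξ) (hφ : ContDiff ℝ ∞ φ) (hξ' : ∀ x, deriv ξ x ≠ 0)
    (hu : ContDiff ℝ ∞ u) (hv : ContDiff ℝ ∞ v) (hcomp : ∀ x, v (ξ x) = φ x * u x) (x : ℝ) :
    Prolong ξ φ (jet u x) = jet v (ξ x) := by
  funext i
  refine Fin.cases rfl (fun k => ?_) i
  rw [congrFun (prolong_succ hξ hφ hξ' k) (jet u x),
    fiberLinear_prolongCoeffs_jet hξ hφ hξ' hu hv hcomp k.is_le x]
  rfl

theorem exists_jet_eq (hξ : ContDiff ℝ ∞ ξ) (hφ : ContDiff ℝ ∞ φ)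
    (hξ' : ∀ x, deriv ξ x ≠ 0) (hφ0 : ∀ x, φ x ≠ 0) (z : J) :
    ∃ u v : ℝ → ℝ, ContDiff ℝ ∞ u ∧ ContDiff ℝ ∞ v ∧ (∀ x, v (ξ x) = φ x * u x) ∧
      jet u (z 0) = z := by
  have hφinv : ContDiff ℝ ∞ fun x => (φ x)⁻¹ := hφ.inv hφ0
  have hpow (k : Fin 5) := iteratedDeriv_sub_pow_mul hξ hφinv (z 0) k
  obtain ⟨e, he⟩ := exists_iteratedDeriv_sum_eq
    (b := fun k x => (ξ x - ξ (z 0)) ^ (k : ℕ) * (φ x)⁻¹)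
    (fun k => ((hξ.sub contDiff_const).pow _).mul hφinv)
    (fun j k hjk => (hpow k).1 j hjk)
    (fun k => by simp [(hpow k).2, Nat.factorial_ne_zero, hξ', hφ0])
    (fun k => z k.succ)
  refine ⟨_, fun t => ∑ k, e k * (t - ξ (z 0)) ^ (k : ℕ),
    ContDiff.sum fun k _ => contDiff_const.mul (((hξ.sub contDiff_const).pow _).mul hφinv),
    ContDiff.sum fun k _ => contDiff_const.mul ((contDiff_id.sub contDiff_const).pow _),
    fun x => ?_, funext fun i => Fin.cases rfl he i⟩
  rw [Finset.mul_sum]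
  refine Finset.sum_congr rfl fun k _ => ?_
  field_simp [hφ0 x]

end Jets

def DirectlyEquivalent (f fb : Fin 5 → ℝ → ℝ) (ξ φ : ℝ → ℝ) : Prop :=
  ∀ u v : ℝ → ℝ, ContDiff ℝ ∞ u → ContDiff ℝ ∞ v → (∀ x, v (ξ x) = φ x * u x) →
    ∀ x, ∑ i : Fin 5, fb i (ξ x) * iteratedDeriv i.1 v (ξ x)
      = ∑ i : Fin 5, f i x * iteratedDeriv i.1 u x

section DirectEquivalence

variable {ξ φ : ℝ → ℝ} {f fb : Fin 5 → ℝ → ℝ}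

theorem Idir_comp_prolong (hξ : ContDiff ℝ ∞ ξ) (hφ : ContDiff ℝ ∞ φ)
    (hξ' : ∀ x, deriv ξ x ≠ 0) (hφ0 : ∀ x, φ x ≠ 0) (heq : DirectlyEquivalent f fb ξ φ) :
    Idir fb ∘ Prolong ξ φ = Idir f := by
  funext z
  obtain ⟨u, v, hu, hv, hcomp, hjet⟩ := exists_jet_eq hξ hφ hξ' hφ0 z
  rw [← hjet, Function.comp_apply, prolong_jet hξ hφ hξ' hu hv hcomp, Idir_jet, Idir_jet]
  exact heq u v hu hv hcomp _

theorem pullback_prolong_fderiv_Idir (hξ : ContDiff ℝ ∞ ξ) (hφ : ContDiff ℝ ∞ φ)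
    (hξ' : ∀ x, deriv ξ x ≠ 0) (hφ0 : ∀ x, φ x ≠ 0) (hfb : ∀ i, ContDiff ℝ ∞ (fb i))
    (heq : DirectlyEquivalent f fb ξ φ) (z : J) :
    pullback (Prolong ξ φ) (fderiv ℝ (Idir fb)) z = fderiv ℝ (Idir f) z := by
  have hfb' i : Differentiable ℝ (fb i) := (hfb i).differentiable (by simp)
  have hI : Differentiable ℝ (Idir fb) := by
    unfold Idir
    fun_prop
  rw [pullback_fderiv (hI _) (differentiable_prolong hξ hφ hξ' z),
    Idir_comp_prolong hξ hφ hξ' hφ0 heq]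

end DirectEquivalence

theorem direct_equivalence_coframes_general (ξ φ : ℝ → ℝ) (f fb : Fin 5 → ℝ → ℝ)
    (hξ : ContDiff ℝ (⊤ : ℕ∞) ξ) (hφ : ContDiff ℝ (⊤ : ℕ∞) φ)
    (hξ' : ∀ x, deriv ξ x ≠ 0) (hφ0 : ∀ x, φ x ≠ 0)
    (hfb : ∀ i, ContDiff ℝ (⊤ : ℕ∞) (fb i))
    -- direct equivalence: `D̄[ū](ξ(x)) = D[u](x)` whenever `ū(ξ(x)) = φ(x)u(x)`
    (heq : ∀ u v : ℝ → ℝ, ContDiff ℝ (⊤ : ℕ∞) u → ContDiff ℝ (⊤ : ℕ∞) v →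
      (∀ x, v (ξ x) = φ x * u x) →
      ∀ x, ∑ i : Fin 5, fb i (ξ x) * iteratedDeriv i.1 v (ξ x)
         = ∑ i : Fin 5, f i x * iteratedDeriv i.1 u x) :
    ∃ a : Fin 10 → (J → ℝ),
      (∀ i, ContDiff ℝ (⊤ : ℕ∞) (a i)) ∧
      (∀ z : J, z 1 ≠ 0 →
        pullback (Prolong ξ φ) ω1 z = a 0 z • ω1 z ∧
        pullback (Prolong ξ φ) ω2 z = ω2 z ∧
        pullback (Prolong ξ φ) ω3 z = a 1 z • ω2 z + a 2 z • ω3 z ∧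
        pullback (Prolong ξ φ) ω4 z = a 3 z • ω2 z + a 4 z • ω3 z + a 5 z • ω4 z ∧
        pullback (Prolong ξ φ) ω5 z
          = a 6 z • ω2 z + a 7 z • ω3 z + a 8 z • ω4 z + a 9 z • ω5 z ∧
        pullback (Prolong ξ φ) (fun w => fderiv ℝ (Idir fb) w) z = fderiv ℝ (Idir f) z) ∧
      (∀ z : J, a 0 z * a 2 z * a 5 z * a 9 z ≠ 0) ∧
      (∀ z : J, a 0 z = deriv ξ (z 0) ∧ a 2 z = φ (z 0) / deriv ξ (z 0) ∧
        a 5 z = φ (z 0) / (deriv ξ (z 0)) ^ 2 ∧ a 9 z = φ (z 0) / (deriv ξ (z 0)) ^ 3) := by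
  set c := prolongCoeffs ξ φ
  have hc n j : ContDiff ℝ ∞ (c n j) := contDiff_prolongCoeffs ξ φ hξ hφ hξ' n j
  refine ⟨![fun z => deriv ξ (z 0),
    fun z => c 1 0 (z 0) * z 1, fun z => c 1 1 (z 0),
    fun z => c 2 0 (z 0) * z 1, fun z => c 2 1 (z 0), fun z => c 2 2 (z 0),
    fun z => c 3 0 (z 0) * z 1, fun z => c 3 1 (z 0), fun z => c 3 2 (z 0), fun z => c 3 3 (z 0)],
    fun i => ?_, fun z hz => ?_, fun z => ?_, fun z => ?_⟩
  · have hξd : ContDiff ℝ ∞ (deriv ξ) := (contDiff_infty_iff_deriv.mp hξ).2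
    fin_cases i <;> dsimp only [Fin.reduceFinMk, Matrix.cons_val] <;> fun_prop
  · refine ⟨pullback_prolong_ω1 hξ hφ hξ' z, pullback_prolong_ω2 hξ hφ hξ' hφ0 hz, ?_, ?_, ?_,
      pullback_prolong_fderiv_Idir hξ hφ hξ' hφ0 hfb heq z⟩
    · exact (pullback_prolong_contact hξ hφ hξ' 1 hz).trans (by simp [c, prolongCoeffs_of_lt])
    · exact (pullback_prolong_contact hξ hφ hξ' 2 hz).trans (by simp [c, prolongCoeffs_of_lt])
    · exact pullback_prolong_contact hξ hφ hξ' 3 hz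
  · simp [c, prolongCoeffs_self, hξ', hφ0]
  · simp [c, prolongCoeffs_self]

/-- Proposition 1, direct equivalence: if `D̄ = D ∘ (1/φ)` under
`x̄ = ξ(x), ū = φ(x)u`, then the prolongation `Φ` relates the two coframes by the
triangular structure group, and `Φ*ω̄⁶ = ω⁶`. -/
theorem direct_equivalence_coframes (ξ φ : ℝ → ℝ) (f fb : Fin 5 → ℝ → ℝ)
    (hξ : ContDiff ℝ (⊤ : ℕ∞) ξ) (hφ : ContDiff ℝ (⊤ : ℕ∞) φ)
    (hξ' : ∀ x, deriv ξ x ≠ 0) (hφ0 : ∀ x, φ x ≠ 0)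
    (hf : ∀ i, ContDiff ℝ (⊤ : ℕ∞) (f i)) (hfb : ∀ i, ContDiff ℝ (⊤ : ℕ∞) (fb i))
    -- direct equivalence: `D̄[ū](ξ(x)) = D[u](x)` whenever `ū(ξ(x)) = φ(x)u(x)`
    (heq : ∀ u v : ℝ → ℝ, ContDiff ℝ (⊤ : ℕ∞) u → ContDiff ℝ (⊤ : ℕ∞) v →
      (∀ x, v (ξ x) = φ x * u x) →
      ∀ x, ∑ i : Fin 5, fb i (ξ x) * iteratedDeriv i.1 v (ξ x)
         = ∑ i : Fin 5, f i x * iteratedDeriv i.1 u x) :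
    ∃ a : Fin 10 → (J → ℝ),
      (∀ i, ContDiff ℝ (⊤ : ℕ∞) (a i)) ∧
      (∀ z : J, z 1 ≠ 0 →
        pullback (Prolong ξ φ) ω1 z = a 0 z • ω1 z ∧
        pullback (Prolong ξ φ) ω2 z = ω2 z ∧
        pullback (Prolong ξ φ) ω3 z = a 1 z • ω2 z + a 2 z • ω3 z ∧
        pullback (Prolong ξ φ) ω4 z = a 3 z • ω2 z + a 4 z • ω3 z + a 5 z • ω4 z ∧
        pullback (Prolong ξ φ) ω5 z
          = a 6 z • ω2 z + a 7 z • ω3 z + a 8 z • ω4 z + a 9 z • ω5 z ∧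
        pullback (Prolong ξ φ) (fun w => fderiv ℝ (Idir fb) w) z = fderiv ℝ (Idir f) z) ∧
      (∀ z : J, a 0 z * a 2 z * a 5 z * a 9 z ≠ 0) ∧
      (∀ z : J, a 0 z = deriv ξ (z 0) ∧ a 2 z = φ (z 0) / deriv ξ (z 0) ∧
        a 5 z = φ (z 0) / (deriv ξ (z 0)) ^ 2 ∧ a 9 z = φ (z 0) / (deriv ξ (z 0)) ^ 3) :=
  direct_equivalence_coframes_general ξ φ f fb hξ hφ hξ' hφ0 hfb heq
end
end
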